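/- In the ℤ-algebra B = ℤ[X₁,…,X_n]/(Xᵢ² − 2Xᵢ), for a polynomial f(X) = Σ_{q=0}^d c_q X^q ∈ ℤ[X], the evaluation f(Σᵢ₌₁ⁿ Y_{{i}}) equals Σ_{p=0}^{n} (Σ_{q=p}^{d} 2^{q−p} p! S(q,p) c_q) · (Σ_{J⊆{1,…,n}, |J|=p} Y_J). -/

import Mathlib

open MvPolynomial

/-- Stirling numbers of the second kind. -/
def stirling : ℕ → ℕ → ℕ
  | 0, 0 => 1
  | 0, _ + 1 => 0
  | _ + 1, 0 => 0
  | n + 1, k + 1 => stirling n k + (k + 1) * stirling n (k + 1)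

/-- The ideal `(X₁² − 2X₁, …, X_n² − 2X_n)` of `ℤ[X₁,…,X_n]`. -/
noncomputable def relIdeal (n : ℕ) : Ideal (MvPolynomial (Fin n) ℤ) :=
  Ideal.span {P | ∃ i : Fin n, P = X i ^ 2 - 2 * X i}

lemma stirling_eq_zero : ∀ q p : ℕ, q < p → stirling q p = 0 := by
  intro q
  induction q with
  | zero => intro p h; cases p with
    | zero => omega
    | succ p => rfl
  | succ q ih =>
    intro p h
    cases p with
    | zero => omega
    | succ p =>
      simp [stirling, ih p (by omega), ih (p+1) (by omega)]

noncomputable def eB (n p : ℕ) : MvPolynomial (Fin n) ℤ ⧸ relIdeal n :=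
  ∑ J ∈ Finset.univ.filter (fun J : Finset (Fin n) => J.card = p),
    Ideal.Quotient.mk (relIdeal n) (∏ j ∈ J, X j)

noncomputable def yB (n : ℕ) : MvPolynomial (Fin n) ℤ ⧸ relIdeal n :=
  ∑ i : Fin n, Ideal.Quotient.mk (relIdeal n) (X i)

lemma xsq (n : ℕ) (i : Fin n) :
    Ideal.Quotient.mk (relIdeal n) (X i) * Ideal.Quotient.mk (relIdeal n) (X i)
      = 2 * Ideal.Quotient.mk (relIdeal n) (X i) := by
  have h0 : Ideal.Quotient.mk (relIdeal n) (X i ^ 2 - 2 * X i) = 0 :=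
    Ideal.Quotient.eq_zero_iff_mem.2 (Ideal.subset_span ⟨i, rfl⟩)
  rw [map_sub, sub_eq_zero, map_pow, map_mul, sq] at h0
  have h2 : Ideal.Quotient.mk (relIdeal n) (2 : MvPolynomial (Fin n) ℤ) = 2 := map_ofNat _ 2
  simpa [h2] using h0

lemma prod_mul_mem (n : ℕ) (J : Finset (Fin n)) (i : Fin n) (hi : i ∈ J) :
    Ideal.Quotient.mk (relIdeal n) (X i) * Ideal.Quotient.mk (relIdeal n) (∏ j ∈ J, X j)
      = 2 * Ideal.Quotient.mk (relIdeal n) (∏ j ∈ J, X j) := by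
  rw [← Finset.mul_prod_erase J _ hi, map_mul, ← mul_assoc, xsq, mul_assoc]

lemma reindex {M : Type*} [AddCommMonoid M] {α : Type*} [Fintype α] [DecidableEq α]
    (p : ℕ) (f : Finset α → M) :
    ∑ J ∈ Finset.filter (fun J : Finset α => J.card = p) Finset.univ,
        ∑ i ∈ Jᶜ, f (insert i J)
      = ∑ K ∈ Finset.filter (fun J : Finset α => J.card = p + 1) Finset.univ,
          ∑ _i ∈ K, f K := by
  rw [Finset.sum_sigma', Finset.sum_sigma']
  refine Finset.sum_nbij' (fun a => ⟨insert a.2 a.1, a.2⟩) (fun a => ⟨a.1.erase a.2, a.2⟩)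
    ?_ ?_ ?_ ?_ ?_
  · rintro ⟨J, i⟩ h
    simp only [Finset.mem_sigma, Finset.mem_filter, Finset.mem_univ, true_and,
      Finset.mem_compl] at h ⊢
    exact ⟨by rw [Finset.card_insert_of_notMem h.2, h.1], Finset.mem_insert_self _ _⟩
  · rintro ⟨K, i⟩ h
    simp only [Finset.mem_sigma, Finset.mem_filter, Finset.mem_univ, true_and,
      Finset.mem_compl] at h ⊢
    exact ⟨by rw [Finset.card_erase_of_mem h.2, h.1]; rfl, Finset.notMem_erase _ _⟩
  · rintro ⟨J, i⟩ h
    simp only [Finset.mem_sigma, Finset.mem_filter, Finset.mem_univ, true_and,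
      Finset.mem_compl] at h
    simp [Finset.erase_insert h.2]
  · rintro ⟨K, i⟩ h
    simp only [Finset.mem_sigma, Finset.mem_filter, Finset.mem_univ, true_and] at h
    simp [Finset.insert_erase h.2]
  · rintro ⟨J, i⟩ h
    rfl


lemma y_mul_e (n p : ℕ) :
    yB n * eB n p = (2 * p : ℤ) • eB n p + ((p : ℤ) + 1) • eB n (p + 1) := by
  classical
  rw [yB, eB, Finset.sum_mul_sum]
  rw [Finset.sum_comm]
  have step : ∀ J ∈ Finset.univ.filter (fun J : Finset (Fin n) => J.card = p),
      (∑ i : Fin n, Ideal.Quotient.mk (relIdeal n) (X i)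
          * Ideal.Quotient.mk (relIdeal n) (∏ j ∈ J, X j))
        = (2 * p : ℤ) • Ideal.Quotient.mk (relIdeal n) (∏ j ∈ J, X j)
          + ∑ i ∈ Jᶜ, Ideal.Quotient.mk (relIdeal n) (∏ j ∈ insert i J, X j) := by
    intro J hJ
    rw [Finset.mem_filter] at hJ
    rw [← Finset.sum_add_sum_compl J]
    congr 1
    · rw [Finset.sum_congr rfl (fun i hi => prod_mul_mem n J i hi), ← Finset.sum_mul]
      simp [hJ.2, Finset.sum_const]
      push_cast
      ring
    · refine Finset.sum_congr rfl fun i hi => ?_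
      rw [Finset.mem_compl] at hi
      rw [Finset.prod_insert hi, map_mul]
  rw [Finset.sum_congr rfl step, Finset.sum_add_distrib, ← Finset.smul_sum]
  congr 1
  -- reindexing
  rw [reindex p (fun K => Ideal.Quotient.mk (relIdeal n) (∏ j ∈ K, X j)), eB,
    Finset.smul_sum]
  refine Finset.sum_congr rfl fun K hK => ?_
  rw [Finset.mem_filter] at hK
  rw [Finset.sum_const, hK.2]
  push_cast
  simp [add_comm]

lemma stirling_succ_succ (q r : ℕ) :
    stirling (q+1) (r+1) = stirling q r + (r+1) * stirling q (r+1) := rfl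

lemma key (q r : ℕ) :
    ((2:ℤ) ^ (q + 1 - (r + 1)) * (r+1).factorial * stirling (q+1) (r+1))
      = 2 * ((r:ℤ) + 1) * ((2:ℤ) ^ (q - (r+1)) * (r+1).factorial * stirling q (r+1))
        + ((r:ℤ) + 1) * ((2:ℤ) ^ (q - r) * r.factorial * stirling q r) := by
  rw [stirling_succ_succ]
  rcases le_or_gt q r with h | h
  · rw [stirling_eq_zero q (r+1) (by omega)]
    have h1 : q + 1 - (r+1) = q - r := by omega
    rw [h1, Nat.factorial_succ]
    push_cast
    ring
  · have h1 : q + 1 - (r+1) = q - r := by omega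
    have h2 : q - r = (q - (r+1)) + 1 := by omega
    rw [h1, h2, Nat.factorial_succ, pow_succ]
    push_cast
    ring

lemma eB_top (n : ℕ) : eB n (n + 1) = 0 := by
  rw [eB]
  have : Finset.univ.filter (fun J : Finset (Fin n) => J.card = n + 1) = ∅ := by
    ext J
    simp only [Finset.mem_filter, Finset.mem_univ, true_and, Finset.notMem_empty,
      iff_false]
    have := Finset.card_le_univ J
    simp at this
    omega
  rw [this, Finset.sum_empty]

lemma eB_zero (n : ℕ) : eB n 0 = 1 := by
  rw [eB]
  have : Finset.univ.filter (fun J : Finset (Fin n) => J.card = 0) = {∅} := by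
    ext J; simp [Finset.card_eq_zero]
  rw [this]
  simp

lemma pow_y (n q : ℕ) :
    yB n ^ q = ∑ p ∈ Finset.range (n + 1),
      ((2:ℤ) ^ (q - p) * p.factorial * stirling q p) • eB n p := by
  induction q with
  | zero =>
    rw [pow_zero, Finset.sum_eq_single 0]
    · simp [stirling, eB_zero]
    · intro p _ hp
      cases p with
      | zero => exact absurd rfl hp
      | succ r => simp [stirling_eq_zero 0 (r+1) r.succ_pos]
    · intro h
      exact absurd (Finset.mem_range.2 n.succ_pos) h
  | succ q ih =>
    rw [pow_succ, ih, Finset.sum_mul]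
    have step : ∀ p ∈ Finset.range (n + 1),
        ((2:ℤ) ^ (q - p) * p.factorial * stirling q p) • eB n p * yB n
          = ((2:ℤ) * p * ((2:ℤ) ^ (q - p) * p.factorial * stirling q p)) • eB n p
            + (((p:ℤ) + 1) * ((2:ℤ) ^ (q - p) * p.factorial * stirling q p)) • eB n (p+1) := by
      intro p _
      rw [smul_mul_assoc, mul_comm (eB n p) (yB n), y_mul_e, smul_add, smul_smul, smul_smul]
      ring_nf
    rw [Finset.sum_congr rfl step, Finset.sum_add_distrib]
    -- first sum: drop p = 0 term
    rw [Finset.sum_range_succ' (fun p => ((2:ℤ) * p * ((2:ℤ) ^ (q - p) * p.factorial * stirling q p)) • eB n p) n]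
    -- second sum: drop last term (eB n (n+1) = 0)
    rw [Finset.sum_range_succ (fun p => (((p:ℤ) + 1) * ((2:ℤ) ^ (q - p) * p.factorial * stirling q p)) • eB n (p+1)) n]
    rw [eB_top, smul_zero, add_zero]
    -- RHS
    rw [Finset.sum_range_succ' (fun p => ((2:ℤ) ^ (q + 1 - p) * p.factorial * stirling (q+1) p) • eB n p) n]
    have h0 : ((2:ℤ) ^ (q + 1 - 0) * Nat.factorial 0 * stirling (q+1) 0) • eB n 0 = 0 := by
      have : stirling (q+1) 0 = 0 := rfl
      simp [this]
    have h0' : ((2:ℤ) * (0:ℕ) * ((2:ℤ) ^ (q - 0) * Nat.factorial 0 * stirling q 0)) • eB n 0 = 0 := by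
      simp
    rw [h0, h0', add_zero, add_zero, ← Finset.sum_add_distrib]
    refine Finset.sum_congr rfl fun r _ => ?_
    rw [← add_smul, key q r]
    push_cast
    ring_nf

/-- In `B = ℤ[X₁,…,X_n]/(Xᵢ² − 2Xᵢ)`, for `f(X) = Σ_{q=0}^d c_q X^q ∈ ℤ[X]`,
`f(Σᵢ Y_{{i}}) = Σ_{p=0}^{n} (Σ_{q=p}^{d} 2^{q−p} p! S(q,p) c_q)·(Σ_{|J|=p} Y_J)`. -/
theorem stmt_10 (n d : ℕ) (c : ℕ → ℤ) :
    ∑ q ∈ Finset.range (d + 1),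
        c q • (∑ i : Fin n, Ideal.Quotient.mk (relIdeal n) (X i)) ^ q =
      ∑ p ∈ Finset.range (n + 1),
        (∑ q ∈ Finset.Icc p d,
            (2 ^ (q - p) * Nat.factorial p * stirling q p : ℤ) * c q) •
          ∑ J ∈ Finset.univ.filter (fun J : Finset (Fin n) => J.card = p),
            Ideal.Quotient.mk (relIdeal n) (∏ j ∈ J, X j) := by
  have hy : (∑ i : Fin n, Ideal.Quotient.mk (relIdeal n) (X i)) = yB n := rfl
  have he : ∀ p : ℕ, (∑ J ∈ Finset.univ.filter (fun J : Finset (Fin n) => J.card = p),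
      Ideal.Quotient.mk (relIdeal n) (∏ j ∈ J, X j)) = eB n p := fun _ => rfl
  rw [hy]
  simp only [he]
  calc ∑ q ∈ Finset.range (d+1), c q • yB n ^ q
      = ∑ q ∈ Finset.range (d+1), ∑ p ∈ Finset.range (n+1),
          (c q * ((2:ℤ)^(q-p) * p.factorial * stirling q p)) • eB n p := by
        refine Finset.sum_congr rfl fun q _ => ?_
        rw [pow_y, Finset.smul_sum]
        exact Finset.sum_congr rfl fun p _ => by rw [smul_smul]
    _ = ∑ p ∈ Finset.range (n+1),
          (∑ q ∈ Finset.range (d+1), c q * ((2:ℤ)^(q-p) * p.factorial * stirling q p)) • eB n p := by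
        rw [Finset.sum_comm]
        exact Finset.sum_congr rfl fun p _ => (Finset.sum_smul).symm
    _ = ∑ p ∈ Finset.range (n+1),
          (∑ q ∈ Finset.Icc p d, ((2:ℤ)^(q-p) * p.factorial * stirling q p) * c q) • eB n p := by
        refine Finset.sum_congr rfl fun p _ => ?_
        congr 1
        have hsub : Finset.Icc p d ⊆ Finset.range (d+1) := fun q hq =>
          Finset.mem_range.2 (by rw [Finset.mem_Icc] at hq; omega)
        have hv : ∀ q ∈ Finset.range (d+1), q ∉ Finset.Icc p d →
            c q * ((2:ℤ)^(q-p) * p.factorial * stirling q p) = 0 := by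
          intro q hq hq'
          rw [Finset.mem_range] at hq
          rw [Finset.mem_Icc] at hq'
          rw [stirling_eq_zero q p (by omega)]
          simp
        rw [← Finset.sum_subset hsub hv]
        exact Finset.sum_congr rfl fun q _ => mul_comm _ _
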